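/- arXiv:2308.09408 — 7 statements merged into one kernel-verified Lean document; each statement's English description precedes it below -/
import Mathlib

section
/- Let X, Y be bounded nonnegative contractions on a Hilbert space K with X + Y = I. Then ran X ∩ ran Y = ran(XY). -/
/-- If `f + g = 1` then `f` and `g = 1 - f` commute, and `u = f a = g b` is the image of `a + b`
under `f * g`, since `f (g b) + g (f a) = f u + g u = u`. -/
theorem LinearMap.range_inf_range_eq_range_mul_of_add_eq_one {R M : Type*} [Ring R]
    [AddCommGroup M] [Module R M] {f g : Module.End R M} (h : f + g = 1) :
    range f ⊓ range g = range (f * g) := by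
  have hg : g = 1 - f := eq_sub_of_add_eq' h
  have hcomm : g * f = f * g := by rw [hg, sub_mul, mul_sub, one_mul, mul_one]
  apply le_antisymm
  · rintro u ⟨⟨a, rfl⟩, ⟨b, hb⟩⟩
    refine ⟨a + b, ?_⟩
    calc (f * g) (a + b) = g (f a) + f (g b) := by
          rw [map_add, ← Module.End.mul_apply g f a, hcomm]; rfl
      _ = f a := by rw [hb, add_comm, ← LinearMap.add_apply, h, Module.End.one_apply]
  · exact le_inf (range_comp_le_range g f) (hcomm ▸ range_comp_le_range f g)

theorem stmt_1_general {K : Type*} [NormedAddCommGroup K] [InnerProductSpace ℝ K]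
    (X Y : K →L[ℝ] K)
    (hXY : X + Y = 1) :
    LinearMap.range (X : K →ₗ[ℝ] K) ⊓ LinearMap.range (Y : K →ₗ[ℝ] K) = LinearMap.range ((X.comp Y : K →L[ℝ] K) : K →ₗ[ℝ] K) := by
  have hXY' : (X : K →ₗ[ℝ] K) + Y = 1 := by
    rw [← ContinuousLinearMap.toLinearMap_add, hXY, ContinuousLinearMap.toLinearMap_one]
  exact LinearMap.range_inf_range_eq_range_mul_of_add_eq_one hXY'

/-- ran X ∩ ran Y = ran (XY) for nonnegative contractions X, Y with X + Y = I. -/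
theorem stmt_1 {K : Type*} [NormedAddCommGroup K] [InnerProductSpace ℝ K] [CompleteSpace K]
    (X Y : K →L[ℝ] K)
    (hXsa : IsSelfAdjoint X) (hYsa : IsSelfAdjoint Y)
    (hX0 : ∀ x, 0 ≤ (inner ℝ (X x) x : ℝ)) (hX1 : ∀ x, (inner ℝ (X x) x : ℝ) ≤ ‖x‖ ^ 2)
    (hY0 : ∀ x, 0 ≤ (inner ℝ (Y x) x : ℝ)) (hY1 : ∀ x, (inner ℝ (Y x) x : ℝ) ≤ ‖x‖ ^ 2)
    (hXY : X + Y = 1) :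
    LinearMap.range (X : K →ₗ[ℝ] K) ⊓ LinearMap.range (Y : K →ₗ[ℝ] K) = LinearMap.range ((X.comp Y : K →L[ℝ] K) : K →ₗ[ℝ] K) :=
  stmt_1_general X Y hXY
end

section
/- Let X, Y be bounded nonnegative contractions on a Hilbert space K with X + Y = I. Then ran X^{1/2} ∩ ran Y^{1/2} = ran(X^{1/2} Y^{1/2}). -/
/-!
Everything rests on `X^{1/2}` and `Y^{1/2}` commuting. Write `1 - √(1 - t) = ∑ cₙ tⁿ`; the
coefficients `cₙ₊₁ = Catalanₙ / 2^(2n+1)` are nonnegative with `∑ cₙ = 1`, so for `‖Y‖ ≤ 1`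
the series `T = 1 - ∑ cₙ Yⁿ` converges in norm, `T ≥ 0` because `‖∑ cₙ Yⁿ‖ ≤ 1`, and the
Catalan recursion gives `T² = 1 - Y = X`. Both `X^{1/2}` and `Y^{1/2}` commute with `Y`, hence
with `T`, and two commuting positive square roots of `X` coincide; so `X^{1/2} = T` commutes
with `Y^{1/2}`. For commuting `A`, `B` with `A² + B² = 1`, an element `z = A a = B b` of both
ranges is `A² z + B² z = A B (A b + B a)`.
-/

open Finset

noncomputable def oneSubSqrtCoeff : ℕ → ℝ
  | 0 => 0
  | m + 1 => catalan m / 2 ^ (2 * m + 1)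

lemma oneSubSqrtCoeff_nonneg (n : ℕ) : 0 ≤ oneSubSqrtCoeff n := by
  cases n <;> simp only [oneSubSqrtCoeff] <;> positivity

lemma sum_antidiagonal_oneSubSqrtCoeff_mul (n : ℕ) :
    ∑ p ∈ antidiagonal n, oneSubSqrtCoeff p.1 * oneSubSqrtCoeff p.2 =
      2 * oneSubSqrtCoeff n - if n = 1 then 1 else 0 := by
  match n with
  | 0 => simp [oneSubSqrtCoeff]
  | 1 => simp [oneSubSqrtCoeff, Nat.sum_antidiagonal_succ]
  | m + 2 =>
    have hterm : ∀ p ∈ antidiagonal m, oneSubSqrtCoeff (p.1 + 1) * oneSubSqrtCoeff (p.2 + 1) =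
        ((catalan p.1 * catalan p.2 : ℕ) : ℝ) / 2 ^ (2 * m + 2) := by
      intro p hp
      rw [HasAntidiagonal.mem_antidiagonal] at hp
      subst hp
      simp only [oneSubSqrtCoeff, Nat.cast_mul]
      field_simp
      ring
    rw [Nat.antidiagonal_succ_succ', sum_cons, sum_cons, sum_map, if_neg (by omega), sub_zero]
    simp only [Function.Embedding.coe_prodMap, Function.Embedding.coeFn_mk, Prod.map_fst,
      Prod.map_snd, Nat.succ_eq_add_one]
    rw [sum_congr rfl hterm, ← sum_div, ← Nat.cast_sum, ← catalan_succ']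
    simp only [oneSubSqrtCoeff]
    field_simp
    ring

lemma centralBinom_succ_eq_mul_catalan (n : ℕ) :
    (n + 1).centralBinom = 2 * (2 * n + 1) * catalan n := by
  refine Nat.eq_of_mul_eq_mul_left n.succ_pos ?_
  rw [Nat.succ_mul_centralBinom_succ, ← succ_mul_catalan_eq_centralBinom, Nat.succ_eq_add_one]
  ring

lemma sum_range_succ_oneSubSqrtCoeff (N : ℕ) :
    ∑ n ∈ range (N + 1), oneSubSqrtCoeff n = 1 - N.centralBinom / 4 ^ N := by
  induction N with
  | zero => simp [oneSubSqrtCoeff]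
  | succ N ih =>
    rw [sum_range_succ, ih, oneSubSqrtCoeff, centralBinom_succ_eq_mul_catalan,
      ← succ_mul_catalan_eq_centralBinom, pow_succ, pow_mul]
    push_cast
    field_simp
    ring

lemma sum_range_oneSubSqrtCoeff_le_one (N : ℕ) : ∑ n ∈ range N, oneSubSqrtCoeff n ≤ 1 := by
  cases N with
  | zero => simp
  | succ N =>
    rw [sum_range_succ_oneSubSqrtCoeff]
    exact sub_le_self _ (by positivity)

lemma summable_oneSubSqrtCoeff : Summable oneSubSqrtCoeff :=
  summable_of_sum_range_le oneSubSqrtCoeff_nonneg sum_range_oneSubSqrtCoeff_le_one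

lemma tsum_oneSubSqrtCoeff_le_one : ∑' n, oneSubSqrtCoeff n ≤ 1 :=
  summable_oneSubSqrtCoeff.tsum_le_of_sum_range_le sum_range_oneSubSqrtCoeff_le_one

section BanachAlgebra

variable {𝔸 : Type*} [NormedRing 𝔸] [NormedAlgebra ℝ 𝔸] {a : 𝔸}

noncomputable def oneSubSqrtSeries (a : 𝔸) : 𝔸 := ∑' n, oneSubSqrtCoeff n • a ^ n

lemma IsSelfAdjoint.oneSubSqrtSeries [StarRing 𝔸] [StarModule ℝ 𝔸] [ContinuousStar 𝔸]
    (ha : IsSelfAdjoint a) : IsSelfAdjoint (oneSubSqrtSeries a) := by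
  rw [IsSelfAdjoint, _root_.oneSubSqrtSeries, tsum_star]
  exact tsum_congr fun n => ((IsSelfAdjoint.all _).smul (ha.pow n)).star_eq

lemma norm_oneSubSqrtCoeff_smul_pow_le (ha : ‖a‖ ≤ 1) (n : ℕ) :
    ‖oneSubSqrtCoeff n • a ^ n‖ ≤ oneSubSqrtCoeff n := by
  cases n with
  | zero => simp [oneSubSqrtCoeff]
  | succ n =>
    rw [norm_smul, Real.norm_of_nonneg (oneSubSqrtCoeff_nonneg _)]
    refine mul_le_of_le_one_right (oneSubSqrtCoeff_nonneg _) ?_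
    exact (norm_pow_le' a n.succ_pos).trans (pow_le_one₀ (norm_nonneg a) ha)

lemma summable_norm_oneSubSqrtCoeff_smul_pow (ha : ‖a‖ ≤ 1) :
    Summable fun n => ‖oneSubSqrtCoeff n • a ^ n‖ :=
  summable_oneSubSqrtCoeff.of_nonneg_of_le (fun _ => norm_nonneg _)
    (norm_oneSubSqrtCoeff_smul_pow_le ha)

lemma norm_oneSubSqrtSeries_le_one (ha : ‖a‖ ≤ 1) : ‖oneSubSqrtSeries a‖ ≤ 1 :=
  calc ‖oneSubSqrtSeries a‖ ≤ ∑' n, ‖oneSubSqrtCoeff n • a ^ n‖ :=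
        norm_tsum_le_tsum_norm (summable_norm_oneSubSqrtCoeff_smul_pow ha)
    _ ≤ ∑' n, oneSubSqrtCoeff n :=
        (summable_norm_oneSubSqrtCoeff_smul_pow ha).tsum_le_tsum
          (norm_oneSubSqrtCoeff_smul_pow_le ha) summable_oneSubSqrtCoeff
    _ ≤ 1 := tsum_oneSubSqrtCoeff_le_one

variable [CompleteSpace 𝔸]

lemma Commute.oneSubSqrtSeries {b : 𝔸} (h : Commute b a) (ha : ‖a‖ ≤ 1) :
    Commute b (oneSubSqrtSeries a) := by
  have hs := (summable_norm_oneSubSqrtCoeff_smul_pow ha).of_norm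
  rw [Commute, SemiconjBy, _root_.oneSubSqrtSeries, ← hs.tsum_mul_left, ← hs.tsum_mul_right]
  exact tsum_congr fun n => ((h.pow_right n).smul_right _).eq

lemma oneSubSqrtSeries_mul_self (ha : ‖a‖ ≤ 1) :
    oneSubSqrtSeries a * oneSubSqrtSeries a = 2 • oneSubSqrtSeries a - a := by
  have hs := summable_norm_oneSubSqrtCoeff_smul_pow ha
  have hterm (n : ℕ) : ∑ p ∈ antidiagonal n,
      oneSubSqrtCoeff p.1 • a ^ p.1 * oneSubSqrtCoeff p.2 • a ^ p.2 =
        2 • oneSubSqrtCoeff n • a ^ n - (if n = 1 then a else 0) := by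
    have hpow : ∀ p ∈ antidiagonal n,
        oneSubSqrtCoeff p.1 • a ^ p.1 * oneSubSqrtCoeff p.2 • a ^ p.2 =
          (oneSubSqrtCoeff p.1 * oneSubSqrtCoeff p.2) • a ^ n := by
      intro p hp
      rw [smul_mul_smul_comm, ← pow_add, HasAntidiagonal.mem_antidiagonal.mp hp]
    rw [sum_congr rfl hpow, ← sum_smul, sum_antidiagonal_oneSubSqrtCoeff_mul, sub_smul, mul_smul,
      ofNat_smul_eq_nsmul]
    split_ifs with hn <;> simp [hn]
  rw [oneSubSqrtSeries, tsum_mul_tsum_eq_tsum_sum_antidiagonal_of_summable_norm hs hs,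
    tsum_congr hterm, (hs.of_norm.nsmul 2).tsum_sub (hasSum_ite_eq 1 a).summable,
    hs.of_norm.tsum_nsmul, tsum_ite_eq]

lemma one_sub_oneSubSqrtSeries_mul_self (ha : ‖a‖ ≤ 1) :
    (1 - oneSubSqrtSeries a) * (1 - oneSubSqrtSeries a) = 1 - a := by
  rw [sub_mul, mul_sub, mul_sub, oneSubSqrtSeries_mul_self ha]
  simp only [one_mul, mul_one, two_nsmul]
  abel

end BanachAlgebra

namespace ContinuousLinearMap

variable {E : Type*} [NormedAddCommGroup E] [InnerProductSpace ℝ E] {A B T : E →L[ℝ] E}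

lemma IsPositive.norm_le_one_of_inner_le (hT : T.IsPositive)
    (h : ∀ x, inner ℝ (T x) x ≤ ‖x‖ ^ 2) : ‖T‖ ≤ 1 := by
  rw [T.norm_eq_iSup_rayleighQuotient hT.isSymmetric]
  refine ciSup_le fun x => ?_
  rw [rayleighQuotient, reApplyInnerSelf_apply, RCLike.re_to_real,
    abs_of_nonneg (div_nonneg (hT.inner_nonneg_left x) (sq_nonneg _))]
  exact div_le_one_of_le₀ (h x) (sq_nonneg _)

lemma IsPositive.apply_eq_zero_of_inner_eq_zero (hA : A.IsPositive) {x : E}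
    (h : inner ℝ (A x) x = 0) : A x = 0 := by
  let b : LinearMap.BilinForm ℝ E := (innerₗ E).comp A.toLinearMap
  have hb : LinearMap.IsSymm b := ⟨fun u v => by
    simp only [b, LinearMap.comp_apply, innerₗ_apply_apply, coe_coe, RingHom.id_apply]
    rw [hA.inner_left_eq_inner_right, real_inner_comm]⟩
  have hx : b x = 0 := (b.apply_apply_same_eq_zero_iff hA.inner_nonneg_left hb).mp h
  simpa [b] using LinearMap.congr_fun hx (A x)

lemma IsPositive.apply_eq_zero_of_add_apply_eq_zero (hA : A.IsPositive) (hB : B.IsPositive)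
    {x : E} (h : (A + B) x = 0) : A x = 0 := by
  have hsum : inner ℝ (A x) x + inner ℝ (B x) x = 0 := by
    rw [← inner_add_left, ← add_apply, h, inner_zero_left]
  exact hA.apply_eq_zero_of_inner_eq_zero
    (le_antisymm (by linarith [hB.inner_nonneg_left x]) (hA.inner_nonneg_left x))

variable [CompleteSpace E]

lemma isPositive_one_sub_of_norm_le_one (hT : IsSelfAdjoint T) (h : ‖T‖ ≤ 1) :
    (1 - T).IsPositive := by
  refine (isPositive_iff' _).2 ⟨.sub (.one _) hT, fun x => ?_⟩
  have : inner ℝ (T x) x ≤ ‖x‖ ^ 2 :=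
    calc inner ℝ (T x) x ≤ ‖T x‖ * ‖x‖ := real_inner_le_norm _ _
      _ ≤ ‖T‖ * ‖x‖ * ‖x‖ := by gcongr; exact T.le_opNorm x
      _ ≤ ‖x‖ ^ 2 := by nlinarith [norm_nonneg x]
  simpa [inner_sub_left, real_inner_self_eq_norm_sq] using this

lemma IsPositive.eq_of_commute_of_mul_self_eq (hA : A.IsPositive) (hB : B.IsPositive)
    (hAB : Commute A B) (h : A * A = B * B) : A = B := by
  have hR : (A + B) * (A - B) = 0 := by
    rw [add_mul, mul_sub, mul_sub, h, hAB.eq, sub_add_sub_cancel, sub_self]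
  have hAR : A * (A - B) = 0 := ext fun x =>
    hA.apply_eq_zero_of_add_apply_eq_zero hB (DFunLike.congr_fun hR x)
  have hBR : B * (A - B) = 0 := ext fun x =>
    hB.apply_eq_zero_of_add_apply_eq_zero hA (DFunLike.congr_fun (add_comm A B ▸ hR) x)
  have : star (A - B) * (A - B) = 0 := by
    rw [(hA.isSelfAdjoint.sub hB.isSelfAdjoint).star_eq, sub_mul, hAR, hBR, sub_zero]
  exact sub_eq_zero.mp (CStarRing.star_mul_self_eq_zero_iff _ |>.mp this)

lemma IsPositive.eq_one_sub_oneSubSqrtSeries {Y : E →L[ℝ] E} (hA : A.IsPositive)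
    (hY : IsSelfAdjoint Y) (hY1 : ‖Y‖ ≤ 1) (hAY : A * A = 1 - Y) :
    A = 1 - oneSubSqrtSeries Y := by
  have hAY_comm : Commute A Y := by
    rw [← sub_sub_cancel 1 Y, ← hAY]
    exact (Commute.one_right A).sub_right ((Commute.refl A).mul_right (.refl A))
  refine (IsPositive.eq_of_commute_of_mul_self_eq
    (isPositive_one_sub_of_norm_le_one hY.oneSubSqrtSeries (norm_oneSubSqrtSeries_le_one hY1))
    hA ?_ (by rw [one_sub_oneSubSqrtSeries_mul_self hY1, hAY])).symm
  exact ((Commute.one_left A).sub_left (hAY_comm.oneSubSqrtSeries hY1).symm)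

end ContinuousLinearMap

lemma LinearMap.range_inf_range_eq_range_mul_of_commute {R M : Type*} [Semiring R]
    [AddCommMonoid M] [Module R M] {f g : Module.End R M} (hfg : Commute f g)
    (h : f * f + g * g = 1) : range f ⊓ range g = range (f * g) := by
  have hfg' (x : M) : f (g x) = g (f x) := LinearMap.congr_fun hfg.eq x
  refine le_antisymm ?_ ?_
  · rintro _ ⟨⟨a, rfl⟩, ⟨b, hb⟩⟩
    refine ⟨f b + g a, ?_⟩
    calc (f * g) (f b + g a) = f (g (f b)) + f (g (g a)) := map_add _ _ _
      _ = f (f (g b)) + g (g (f a)) := by rw [← hfg' b, hfg' (g a), hfg' a]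
      _ = f a := by rw [hb]; exact LinearMap.congr_fun h (f a)
  · rintro _ ⟨v, rfl⟩
    exact ⟨⟨g v, rfl⟩, ⟨f v, (hfg' v).symm⟩⟩

theorem stmt_2_general {K : Type*} [NormedAddCommGroup K] [InnerProductSpace ℝ K] [CompleteSpace K]
    (X Y Sx Sy : K →L[ℝ] K)
    (hYsa : IsSelfAdjoint Y)
    (hY0 : ∀ x, 0 ≤ (inner ℝ (Y x) x : ℝ)) (hY1 : ∀ x, (inner ℝ (Y x) x : ℝ) ≤ ‖x‖ ^ 2)
    (hXY : X + Y = 1)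
    (hSxsa : IsSelfAdjoint Sx) (hSx0 : ∀ x, 0 ≤ (inner ℝ (Sx x) x : ℝ))
    (hSx : Sx.comp Sx = X)
    (hSy : Sy.comp Sy = Y) :
    LinearMap.range (Sx : K →ₗ[ℝ] K) ⊓ LinearMap.range (Sy : K →ₗ[ℝ] K) = LinearMap.range ((Sx.comp Sy : K →L[ℝ] K) : K →ₗ[ℝ] K) := by
  have hYnorm : ‖Y‖ ≤ 1 :=
    ((ContinuousLinearMap.isPositive_iff' Y).2 ⟨hYsa, hY0⟩).norm_le_one_of_inner_le hY1
  have hSx_eq : Sx = 1 - oneSubSqrtSeries Y :=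
    ((ContinuousLinearMap.isPositive_iff' Sx).2 ⟨hSxsa, hSx0⟩).eq_one_sub_oneSubSqrtSeries
      hYsa hYnorm (hSx.trans (eq_sub_of_add_eq hXY))
  have hSyY : Commute Sy Y := hSy ▸ (Commute.refl Sy).mul_right (.refl Sy)
  have hcomm : Commute Sx Sy :=
    hSx_eq ▸ (Commute.one_left Sy).sub_left (hSyY.oneSubSqrtSeries hYnorm).symm
  refine LinearMap.range_inf_range_eq_range_mul_of_commute
    (hcomm.map ContinuousLinearMap.toLinearMapRingHom) ?_
  have h : Sx * Sx + Sy * Sy = 1 := by rw [← hXY, ← hSx, ← hSy]; rfl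
  simpa using congrArg ContinuousLinearMap.toLinearMapRingHom h

/-- ran X^{1/2} ∩ ran Y^{1/2} = ran (X^{1/2} Y^{1/2}) for nonnegative
contractions X, Y with X + Y = I.  The (unique) nonnegative square roots are
quantified as selfadjoint nonnegative operators Sx, Sy with Sx² = X, Sy² = Y. -/
theorem stmt_2 {K : Type*} [NormedAddCommGroup K] [InnerProductSpace ℝ K] [CompleteSpace K]
    (X Y Sx Sy : K →L[ℝ] K)
    (hXsa : IsSelfAdjoint X) (hYsa : IsSelfAdjoint Y)
    (hX0 : ∀ x, 0 ≤ (inner ℝ (X x) x : ℝ)) (hX1 : ∀ x, (inner ℝ (X x) x : ℝ) ≤ ‖x‖ ^ 2)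
    (hY0 : ∀ x, 0 ≤ (inner ℝ (Y x) x : ℝ)) (hY1 : ∀ x, (inner ℝ (Y x) x : ℝ) ≤ ‖x‖ ^ 2)
    (hXY : X + Y = 1)
    (hSxsa : IsSelfAdjoint Sx) (hSx0 : ∀ x, 0 ≤ (inner ℝ (Sx x) x : ℝ))
    (hSx : Sx.comp Sx = X)
    (hSysa : IsSelfAdjoint Sy) (hSy0 : ∀ x, 0 ≤ (inner ℝ (Sy x) x : ℝ))
    (hSy : Sy.comp Sy = Y) :
    LinearMap.range (Sx : K →ₗ[ℝ] K) ⊓ LinearMap.range (Sy : K →ₗ[ℝ] K) = LinearMap.range ((Sx.comp Sy : K →L[ℝ] K) : K →ₗ[ℝ] K) :=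
  stmt_2_general X Y Sx Sy hYsa hY0 hY1 hXY hSxsa hSx0 hSx hSy
end

section
/- Let X, Y be bounded nonnegative contractions on a Hilbert space K with X + Y = I. Then the closure of ran X intersected with the closure of ran Y equals the closure of ran(XY). -/
/-!
For self-adjoint `T` the closed range is `(ker T)ᗮ`. Since `Y = 1 - X` commutes with `X`, the
product `XY` is self-adjoint too, and `ker XY = ker X ⊔ ker Y` because `z = Yz + Xz` with
`Yz ∈ ker X` and `Xz ∈ ker Y`. Taking orthogonal complements turns this sum of kernels into the
intersection of the closed ranges.
-/

theorem Commute.of_add_eq_one {R : Type*} [Ring R] {a b : R} (h : a + b = 1) : Commute a b := by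
  rw [eq_sub_of_add_eq' h]
  exact (Commute.one_right a).sub_right (Commute.refl a)

lemma LinearMap.ker_mul_eq_sup_of_add_eq_one {R M : Type*} [Semiring R] [AddCommGroup M]
    [Module R M] {f g : Module.End R M} (h : f + g = 1) : ker (f * g) = ker f ⊔ ker g := by
  have hfg : f * g = g * f := (Commute.of_add_eq_one h).eq
  refine le_antisymm (fun z hz => ?_) (sup_le ?_ (ker_le_ker_comp g f))
  · have hgz : g z ∈ ker f := hz
    have hfz : f z ∈ ker g := by
      rw [mem_ker, ← Module.End.mul_apply, ← hfg]
      exact hz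
    have hz : g z + f z = z := by
      rw [add_comm, ← add_apply, h, Module.End.one_apply]
    exact hz ▸ Submodule.add_mem_sup hgz hfz
  · rw [hfg]
    exact ker_le_ker_comp f g

lemma IsSelfAdjoint.closure_range_eq_orthogonal_ker {𝕜 E : Type*} [RCLike 𝕜]
    [NormedAddCommGroup E] [InnerProductSpace 𝕜 E] [CompleteSpace E] {T : E →L[𝕜] E}
    (hT : IsSelfAdjoint T) :
    (LinearMap.range (T : E →ₗ[𝕜] E)).topologicalClosure = (LinearMap.ker (T : E →ₗ[𝕜] E))ᗮ := by
  simpa [hT.adjoint_eq] using T.orthogonal_ker.symm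

theorem stmt_3_general {K : Type*} [NormedAddCommGroup K] [InnerProductSpace ℝ K] [CompleteSpace K]
    (X Y : K →L[ℝ] K)
    (hXsa : IsSelfAdjoint X) (hYsa : IsSelfAdjoint Y)
    (hXY : X + Y = 1) :
    (LinearMap.range (X : K →ₗ[ℝ] K)).topologicalClosure ⊓ (LinearMap.range (Y : K →ₗ[ℝ] K)).topologicalClosure
      = (LinearMap.range ((X.comp Y : K →L[ℝ] K) : K →ₗ[ℝ] K)).topologicalClosure := by
  have hXYsa : IsSelfAdjoint (X.comp Y) := (hXsa.commute_iff hYsa).mp (.of_add_eq_one hXY)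
  have hker : LinearMap.ker ((X.comp Y : K →L[ℝ] K) : K →ₗ[ℝ] K) =
      LinearMap.ker (X : K →ₗ[ℝ] K) ⊔ LinearMap.ker (Y : K →ₗ[ℝ] K) :=
    LinearMap.ker_mul_eq_sup_of_add_eq_one <| by
      simpa using congrArg ContinuousLinearMap.toLinearMap hXY
  rw [hXsa.closure_range_eq_orthogonal_ker, hYsa.closure_range_eq_orthogonal_ker,
    hXYsa.closure_range_eq_orthogonal_ker, hker, Submodule.inf_orthogonal]

/-- closure(ran X) ∩ closure(ran Y) = closure(ran XY) for nonnegative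
contractions X, Y with X + Y = I. -/
theorem stmt_3 {K : Type*} [NormedAddCommGroup K] [InnerProductSpace ℝ K] [CompleteSpace K]
    (X Y : K →L[ℝ] K)
    (hXsa : IsSelfAdjoint X) (hYsa : IsSelfAdjoint Y)
    (hX0 : ∀ x, 0 ≤ (inner ℝ (X x) x : ℝ)) (hX1 : ∀ x, (inner ℝ (X x) x : ℝ) ≤ ‖x‖ ^ 2)
    (hY0 : ∀ x, 0 ≤ (inner ℝ (Y x) x : ℝ)) (hY1 : ∀ x, (inner ℝ (Y x) x : ℝ) ≤ ‖x‖ ^ 2)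
    (hXY : X + Y = 1) :
    (LinearMap.range (X : K →ₗ[ℝ] K)).topologicalClosure ⊓ (LinearMap.range (Y : K →ₗ[ℝ] K)).topologicalClosure
      = (LinearMap.range ((X.comp Y : K →L[ℝ] K) : K →ₗ[ℝ] K)).topologicalClosure :=
  stmt_3_general X Y hXsa hYsa hXY
end

section
/- Let X, Y be bounded nonnegative contractions on a Hilbert space K with X + Y = I. If ran X ∩ ran Y = {0}, then X and Y are orthogonal projections. -/
/-!
Since `Y = 1 - X`, the operators `X` and `Y` commute, so `XYz = YXz` lies in `ran X ∩ ran Y = 0`.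
Hence `X (1 - X) = XY = 0`, i.e. `X` is idempotent, and then so is `Y = 1 - X`.
-/

open LinearMap in
theorem Module.End.mul_eq_zero_of_commute_of_range_inf_eq_bot {R M : Type*} [Semiring R]
    [AddCommMonoid M] [Module R M] {f g : Module.End R M} (hfg : Commute f g)
    (h : range f ⊓ range g = ⊥) : f * g = 0 := by
  ext x
  have hmem : f (g x) ∈ range f ⊓ range g :=
    ⟨mem_range_self f (g x), f x, (LinearMap.congr_fun hfg.eq x).symm⟩
  simpa [h] using hmem

theorem stmt_4_general {K : Type*} [NormedAddCommGroup K] [InnerProductSpace ℝ K] [CompleteSpace K]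
    (X Y : K →L[ℝ] K)
    (hXsa : IsSelfAdjoint X) (hYsa : IsSelfAdjoint Y)
    (hXY : X + Y = 1)
    (htriv : LinearMap.range (X : K →ₗ[ℝ] K) ⊓ LinearMap.range (Y : K →ₗ[ℝ] K) = ⊥) :
    (IsSelfAdjoint X ∧ X.comp X = X) ∧ (IsSelfAdjoint Y ∧ Y.comp Y = Y) := by
  have hY : Y = 1 - X := eq_sub_of_add_eq' hXY
  have hcomm : Commute (X : K →ₗ[ℝ] K) Y := by
    rw [hY]
    exact ((Commute.one_right X).sub_right (Commute.refl X)).map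
      ContinuousLinearMap.toLinearMapRingHom
  have hXY0 : X * Y = 0 := ContinuousLinearMap.coe_injective
    (Module.End.mul_eq_zero_of_commute_of_range_inf_eq_bot hcomm htriv)
  have hX : IsIdempotentElem X := isIdempotentElem_iff_mul_one_sub_self.mpr (hY ▸ hXY0)
  exact ⟨⟨hXsa, hX⟩, hYsa, hY ▸ hX.one_sub⟩

/-- if ran X ∩ ran Y = {0} for nonnegative contractions X, Y with
X + Y = I, then X and Y are orthogonal projections (selfadjoint idempotents). -/
theorem stmt_4 {K : Type*} [NormedAddCommGroup K] [InnerProductSpace ℝ K] [CompleteSpace K]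
    (X Y : K →L[ℝ] K)
    (hXsa : IsSelfAdjoint X) (hYsa : IsSelfAdjoint Y)
    (hX0 : ∀ x, 0 ≤ (inner ℝ (X x) x : ℝ)) (hX1 : ∀ x, (inner ℝ (X x) x : ℝ) ≤ ‖x‖ ^ 2)
    (hY0 : ∀ x, 0 ≤ (inner ℝ (Y x) x : ℝ)) (hY1 : ∀ x, (inner ℝ (Y x) x : ℝ) ≤ ‖x‖ ^ 2)
    (hXY : X + Y = 1)
    (htriv : LinearMap.range (X : K →ₗ[ℝ] K) ⊓ LinearMap.range (Y : K →ₗ[ℝ] K) = ⊥) :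
    (IsSelfAdjoint X ∧ X.comp X = X) ∧ (IsSelfAdjoint Y ∧ Y.comp Y = Y) :=
  stmt_4_general X Y hXsa hYsa hXY htriv
end

section
/- Let X, Y be nonnegative contractions on a Hilbert space K with X + Y = I, with operator range spaces 𝔛 = ran X^{1/2} and 𝔜 = ran Y^{1/2}. The adjoint V* of the isometry V h = (Xh, Yh) : K → 𝔛 × 𝔜 is the addition map V*(f, g) = f + g for f ∈ 𝔛, g ∈ 𝔜. Consequently ‖f + g‖²_K ≤ ‖f‖²_𝔛 + ‖g‖²_𝔜 for all f ∈ 𝔛, g ∈ 𝔜, with equality if and only if f = Xh and g = Yh for some h ∈ K. -/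
/-!
Since `Sx² + Sy² = X + Y = 1` with `Sx`, `Sy` self-adjoint, the column `V h = (Sx h, Sy h)` is an
isometry whose adjoint is `(a, b) ↦ Sx a + Sy b`; then `V V*` is an orthogonal projection, and
Pythagoras gives `‖(a, b)‖² = ‖V* (a, b)‖² + ‖(a, b) - V V* (a, b)‖²`. Taking `a = πX φ`,
`b = πY ψ` gives `V* (a, b) = Sx φ + Sy ψ`, because `ker πX = (range Sx)ᗮ = ker Sx`.
The equality case is `(a, b) ∈ range V`, which translates back to `Sx φ = X h`, `Sy ψ = Y h`
by the same kernel identity.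
-/

namespace ContinuousLinearMap

theorem apply_apply_eq_self_of_range_eq_topologicalClosure_range {R M : Type*} [Semiring R]
    [TopologicalSpace M] [AddCommMonoid M] [ContinuousAdd M] [Module R M]
    [ContinuousConstSMul R M] {S P : M →L[R] M} (hP : IsIdempotentElem P)
    (hran : LinearMap.range (P : M →ₗ[R] M) =
      (LinearMap.range (S : M →ₗ[R] M)).topologicalClosure) (w : M) :
    P (S w) = S w :=
  LinearMap.IsIdempotentElem.mem_range_iff (IsIdempotentElem.toLinearMap hP) |>.mp <|
    hran ▸ Submodule.le_topologicalClosure _ (LinearMap.mem_range_self _ w)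

variable {𝕜 E : Type*} [RCLike 𝕜] [NormedAddCommGroup E] [InnerProductSpace 𝕜 E] [CompleteSpace E]

section RangeClosureProjection

variable {S P : E →L[𝕜] E}

theorem ker_eq_ker_of_range_eq_topologicalClosure_range (hS : IsSelfAdjoint S)
    (hP : IsSelfAdjoint P)
    (hran : LinearMap.range (P : E →ₗ[𝕜] E) =
      (LinearMap.range (S : E →ₗ[𝕜] E)).topologicalClosure) :
    LinearMap.ker (P : E →ₗ[𝕜] E) = LinearMap.ker (S : E →ₗ[𝕜] E) := by
  rw [← hP.isSymmetric.orthogonal_range, hran, Submodule.orthogonal_closure,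
    hS.isSymmetric.orthogonal_range]

theorem apply_apply_eq_of_range_eq_topologicalClosure_range (hS : IsSelfAdjoint S)
    (hP : IsStarProjection P)
    (hran : LinearMap.range (P : E →ₗ[𝕜] E) =
      (LinearMap.range (S : E →ₗ[𝕜] E)).topologicalClosure) (u : E) :
    S (P u) = S u := by
  have hker : u - P u ∈ LinearMap.ker (P : E →ₗ[𝕜] E) := by
    rw [LinearMap.mem_ker, coe_coe, map_sub, ← mul_apply_eq_comp, hP.isIdempotentElem.eq,
      sub_self]
  rw [ker_eq_ker_of_range_eq_topologicalClosure_range hS hP.isSelfAdjoint hran,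
    LinearMap.mem_ker, coe_coe, map_sub, sub_eq_zero] at hker
  exact hker.symm

theorem apply_eq_apply_iff_of_range_eq_topologicalClosure_range (hS : IsSelfAdjoint S)
    (hP : IsStarProjection P)
    (hran : LinearMap.range (P : E →ₗ[𝕜] E) =
      (LinearMap.range (S : E →ₗ[𝕜] E)).topologicalClosure) (u w : E) :
    P u = S w ↔ S u = S (S w) := by
  constructor
  · intro h
    rw [← apply_apply_eq_of_range_eq_topologicalClosure_range hS hP hran u, h]
  · intro h
    have hker : u - S w ∈ LinearMap.ker (S : E →ₗ[𝕜] E) := by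
      rw [LinearMap.mem_ker, coe_coe, map_sub, h, sub_self]
    rw [← ker_eq_ker_of_range_eq_topologicalClosure_range hS hP.isSelfAdjoint hran,
      LinearMap.mem_ker, coe_coe, map_sub, sub_eq_zero,
      apply_apply_eq_self_of_range_eq_topologicalClosure_range hP.isIdempotentElem hran] at hker
    exact hker

end RangeClosureProjection

section ColumnIsometry

variable {A B : E →L[𝕜] E}

theorem norm_sq_add_norm_sq_eq_of_comp_self_add_comp_self_eq_one (hA : IsSelfAdjoint A)
    (hB : IsSelfAdjoint B) (hAB : A ∘L A + B ∘L B = 1) (h : E) :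
    ‖A h‖ ^ 2 + ‖B h‖ ^ 2 = ‖h‖ ^ 2 := by
  have hsq : ∀ T : E →L[𝕜] E, IsSelfAdjoint T →
      ‖T h‖ ^ 2 = RCLike.re (inner 𝕜 ((T ∘L T) h) h) := by
    intro T hT
    rw [comp_apply, hT.isSymmetric.apply_clm, inner_self_eq_norm_sq]
  rw [hsq A hA, hsq B hB, ← map_add, ← inner_add_left, ← add_apply, hAB, one_apply_eq_self,
    inner_self_eq_norm_sq]

theorem norm_sub_sq_add_norm_sub_sq_eq (hA : IsSelfAdjoint A) (hB : IsSelfAdjoint B)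
    (hAB : A ∘L A + B ∘L B = 1) (a b : E) :
    ‖a - A (A a + B b)‖ ^ 2 + ‖b - B (A a + B b)‖ ^ 2 =
      ‖a‖ ^ 2 + ‖b‖ ^ 2 - ‖A a + B b‖ ^ 2 := by
  set v := A a + B b
  have hcross : RCLike.re (inner 𝕜 a (A v)) + RCLike.re (inner 𝕜 b (B v)) = ‖v‖ ^ 2 := by
    rw [← hA.isSymmetric.apply_clm, ← hB.isSymmetric.apply_clm, ← map_add, ← inner_add_left,
      inner_self_eq_norm_sq (𝕜 := 𝕜)]
  have hnorm := norm_sq_add_norm_sq_eq_of_comp_self_add_comp_self_eq_one hA hB hAB v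
  rw [norm_sub_sq (𝕜 := 𝕜), norm_sub_sq (𝕜 := 𝕜)]
  linarith

theorem norm_apply_add_apply_sq_le (hA : IsSelfAdjoint A) (hB : IsSelfAdjoint B)
    (hAB : A ∘L A + B ∘L B = 1) (a b : E) :
    ‖A a + B b‖ ^ 2 ≤ ‖a‖ ^ 2 + ‖b‖ ^ 2 := by
  have := norm_sub_sq_add_norm_sub_sq_eq hA hB hAB a b
  nlinarith [sq_nonneg ‖a - A (A a + B b)‖, sq_nonneg ‖b - B (A a + B b)‖]

theorem norm_apply_add_apply_sq_eq_iff (hA : IsSelfAdjoint A) (hB : IsSelfAdjoint B)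
    (hAB : A ∘L A + B ∘L B = 1) (a b : E) :
    ‖A a + B b‖ ^ 2 = ‖a‖ ^ 2 + ‖b‖ ^ 2 ↔ a = A (A a + B b) ∧ b = B (A a + B b) := by
  have := norm_sub_sq_add_norm_sub_sq_eq hA hB hAB a b
  rw [← sub_eq_zero (a := a), ← sub_eq_zero (a := b), ← norm_eq_zero (a := a - _),
    ← norm_eq_zero (a := b - _), ← sq_eq_zero_iff (a := ‖a - _‖),
    ← sq_eq_zero_iff (a := ‖b - _‖)]
  constructor
  · intro h
    constructor <;> nlinarith [sq_nonneg ‖a - A (A a + B b)‖, sq_nonneg ‖b - B (A a + B b)‖]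
  · rintro ⟨ha, hb⟩
    linarith

end ColumnIsometry

end ContinuousLinearMap

open ContinuousLinearMap in
theorem stmt_8_general {K : Type*} [NormedAddCommGroup K] [InnerProductSpace ℝ K] [CompleteSpace K]
    (X Y Sx Sy πX πY : K →L[ℝ] K)
    (hXY : X + Y = 1)
    (hSxsa : IsSelfAdjoint Sx) (hSx : Sx.comp Sx = X)
    (hSysa : IsSelfAdjoint Sy) (hSy : Sy.comp Sy = Y)
    (hπXsa : IsSelfAdjoint πX) (hπX2 : πX.comp πX = πX)
    (hπXran : LinearMap.range (πX : K →ₗ[ℝ] K) = (LinearMap.range (Sx : K →ₗ[ℝ] K)).topologicalClosure)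
    (hπYsa : IsSelfAdjoint πY) (hπY2 : πY.comp πY = πY)
    (hπYran : LinearMap.range (πY : K →ₗ[ℝ] K) = (LinearMap.range (Sy : K →ₗ[ℝ] K)).topologicalClosure) :
    (∀ φ ψ h : K,
      (inner ℝ (Sx φ + Sy ψ) h : ℝ) = inner ℝ (πX φ) (Sx h) + inner ℝ (πY ψ) (Sy h)) ∧
    (∀ φ ψ : K,
      ‖Sx φ + Sy ψ‖ ^ 2 ≤ ‖πX φ‖ ^ 2 + ‖πY ψ‖ ^ 2 ∧
      (‖Sx φ + Sy ψ‖ ^ 2 = ‖πX φ‖ ^ 2 + ‖πY ψ‖ ^ 2 ↔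
        ∃ h : K, Sx φ = X h ∧ Sy ψ = Y h)) := by
  have hπX : IsStarProjection πX := ⟨hπX2, hπXsa⟩
  have hπY : IsStarProjection πY := ⟨hπY2, hπYsa⟩
  have hSxπX := apply_apply_eq_of_range_eq_topologicalClosure_range hSxsa hπX hπXran
  have hSyπY := apply_apply_eq_of_range_eq_topologicalClosure_range hSysa hπY hπYran
  have hSS : Sx ∘L Sx + Sy ∘L Sy = 1 := by rw [hSx, hSy, hXY]
  refine ⟨fun φ ψ h => ?_, fun φ ψ => ?_⟩
  · rw [inner_add_left, ← hSxπX, ← hSyπY, hSxsa.isSymmetric.apply_clm,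
      hSysa.isSymmetric.apply_clm]
  have hsum : Sx (πX φ) + Sy (πY ψ) = Sx φ + Sy ψ := by rw [hSxπX, hSyπY]
  refine ⟨hsum ▸ norm_apply_add_apply_sq_le hSxsa hSysa hSS _ _, ?_⟩
  rw [← hsum, norm_apply_add_apply_sq_eq_iff hSxsa hSysa hSS, hsum,
    apply_eq_apply_iff_of_range_eq_topologicalClosure_range hSxsa hπX hπXran,
    apply_eq_apply_iff_of_range_eq_topologicalClosure_range hSysa hπY hπYran,
    ← comp_apply, ← comp_apply, hSx, hSy]
  constructor
  · exact fun h => ⟨_, h⟩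
  · rintro ⟨h, hXh, hYh⟩
    have hv : Sx φ + Sy ψ = h := by rw [hXh, hYh, ← add_apply, hXY, one_apply_eq_self]
    rw [hv]
    exact ⟨hXh, hYh⟩

/-- the adjoint of the isometry V h = (Xh, Yh) : K → 𝔛 × 𝔜 is the addition
map V*(f,g) = f + g, expressed via representatives: every f ∈ 𝔛 is f = Sx φ and every
g ∈ 𝔜 is g = Sy ψ, with de Branges–Rovnyak norms ‖f‖_𝔛 = ‖πX φ‖, ‖g‖_𝔜 = ‖πY ψ‖ and
inner products (f, Xh)_𝔛 = (πX φ, Sx h)_K, (g, Yh)_𝔜 = (πY ψ, Sy h)_K.  The adjoint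
formula reads (f + g, h)_K = (f, Xh)_𝔛 + (g, Yh)_𝔜 for all h; consequently
‖f + g‖²_K ≤ ‖f‖²_𝔛 + ‖g‖²_𝔜, with equality iff f = Xh and g = Yh for some h ∈ K. -/
theorem stmt_8 {K : Type*} [NormedAddCommGroup K] [InnerProductSpace ℝ K] [CompleteSpace K]
    (X Y Sx Sy πX πY : K →L[ℝ] K)
    (hXsa : IsSelfAdjoint X) (hYsa : IsSelfAdjoint Y)
    (hX0 : ∀ x, 0 ≤ (inner ℝ (X x) x : ℝ)) (hX1 : ∀ x, (inner ℝ (X x) x : ℝ) ≤ ‖x‖ ^ 2)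
    (hY0 : ∀ x, 0 ≤ (inner ℝ (Y x) x : ℝ)) (hY1 : ∀ x, (inner ℝ (Y x) x : ℝ) ≤ ‖x‖ ^ 2)
    (hXY : X + Y = 1)
    (hSxsa : IsSelfAdjoint Sx) (hSx0 : ∀ x, 0 ≤ (inner ℝ (Sx x) x : ℝ)) (hSx : Sx.comp Sx = X)
    (hSysa : IsSelfAdjoint Sy) (hSy0 : ∀ x, 0 ≤ (inner ℝ (Sy x) x : ℝ)) (hSy : Sy.comp Sy = Y)
    (hπXsa : IsSelfAdjoint πX) (hπX2 : πX.comp πX = πX)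
    (hπXran : LinearMap.range (πX : K →ₗ[ℝ] K) = (LinearMap.range (Sx : K →ₗ[ℝ] K)).topologicalClosure)
    (hπYsa : IsSelfAdjoint πY) (hπY2 : πY.comp πY = πY)
    (hπYran : LinearMap.range (πY : K →ₗ[ℝ] K) = (LinearMap.range (Sy : K →ₗ[ℝ] K)).topologicalClosure) :
    (∀ φ ψ h : K,
      (inner ℝ (Sx φ + Sy ψ) h : ℝ) = inner ℝ (πX φ) (Sx h) + inner ℝ (πY ψ) (Sy h)) ∧
    (∀ φ ψ : K,
      ‖Sx φ + Sy ψ‖ ^ 2 ≤ ‖πX φ‖ ^ 2 + ‖πY ψ‖ ^ 2 ∧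
      (‖Sx φ + Sy ψ‖ ^ 2 = ‖πX φ‖ ^ 2 + ‖πY ψ‖ ^ 2 ↔
        ∃ h : K, Sx φ = X h ∧ Sy ψ = Y h)) :=
  stmt_8_general X Y Sx Sy πX πY hXY hSxsa hSx hSysa hSy hπXsa hπX2 hπXran hπYsa hπY2 hπYran
end

section
/- Let X, Y be nonnegative contractions on a Hilbert space K with X + Y = I, and let V h = (Xh, Yh) be the isometry from K to 𝔛 × 𝔜. Then the orthogonal complement of ran V in 𝔛 × 𝔜 equals { (−X^{1/2}Y^{1/2}k, X^{1/2}Y^{1/2}k) : k ∈ closure(ran XY) }, and V is surjective if and only if X and Y are orthogonal projections. -/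
/-!
Write `A = X^{1/2}` and `B = Y^{1/2}`, so that `A * A + B * B = 1`. The coefficients
`aₙ = (-1)ⁿ C(1/2, n)` of `√(1 - t)` are nonpositive for `n ≥ 1` and have nonnegative partial
sums, so `∑ aₙ Wⁿ` converges absolutely when `‖W‖ ≤ 1`. For `W = A * A` it is a positive square
root of `B * B` commuting with everything that commutes with `A * A`; positive square roots of
commuting operators are unique, so it equals `B`, and `A`, `B` commute.

A pair `(φ, ψ)` is orthogonal to the range of `h ↦ (X h, Y h)` iff `A φ + B ψ = 0`, and then
`B ψ = AB (A ψ - B φ)`. Projecting `A ψ - B φ` onto `(ker AB)ᗮ`, the closure of the range of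
`(AB)† AB = XY`, gives `k`. Surjectivity forces `Y A = 0`, hence `Y X = 0`, so `X` and `Y` are
idempotent; conversely a projection is its own positive square root.
-/

open Finset

noncomputable def sqrtOneSubCoeff (n : ℕ) : ℝ := (-1) ^ n * Ring.choose (1 / 2 : ℝ) n

lemma Ring.choose_neg_eq_neg_one_pow_mul_multichoose {R : Type*} [Ring R] [BinomialRing R]
    (r : R) (n : ℕ) : Ring.choose (-r) n = (-1) ^ n * Ring.multichoose r n := by
  simp [Ring.choose_neg', Units.smul_def, Int.negOnePow_def]

lemma Ring.multichoose_pos {R : Type*} [Ring R] [LinearOrder R] [IsStrictOrderedRing R]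
    [BinomialRing R] {r : R} (hr : 0 < r) (n : ℕ) : 0 < Ring.multichoose r n := by
  have h := Ring.factorial_nsmul_multichoose_eq_ascPochhammer r n
  rw [Polynomial.ascPochhammer_smeval_eq_eval, nsmul_eq_mul] at h
  exact pos_of_mul_pos_right (h ▸ ascPochhammer_pos n r hr) (by positivity)

lemma sqrtOneSubCoeff_zero : sqrtOneSubCoeff 0 = 1 := by
  simp [sqrtOneSubCoeff]

lemma sum_antidiagonal_sqrtOneSubCoeff_mul (n : ℕ) :
    ∑ ij ∈ antidiagonal n, sqrtOneSubCoeff ij.1 * sqrtOneSubCoeff ij.2 =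
      (-1) ^ n * Nat.choose 1 n := by
  have h := Ring.add_choose_eq (r := (1 / 2 : ℝ)) (s := 1 / 2) n (Commute.refl _)
  rw [add_halves, show Ring.choose (1 : ℝ) n = Nat.choose 1 n by
    simpa using Ring.choose_natCast (R := ℝ) 1 n] at h
  rw [h, mul_sum]
  refine sum_congr rfl fun ij hij => ?_
  rw [HasAntidiagonal.mem_antidiagonal] at hij
  simp only [sqrtOneSubCoeff, ← hij, pow_add]
  ring

lemma sum_range_succ_sqrtOneSubCoeff (n : ℕ) :
    ∑ k ∈ range (n + 1), sqrtOneSubCoeff k = Ring.multichoose (1 / 2 : ℝ) n := by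
  induction n with
  | zero => simp [sqrtOneSubCoeff]
  | succ n ih =>
    have h := Ring.choose_succ_succ (-(1 / 2) : ℝ) n
    rw [show -(1 / 2) + 1 = (1 / 2 : ℝ) by norm_num,
      Ring.choose_neg_eq_neg_one_pow_mul_multichoose,
      Ring.choose_neg_eq_neg_one_pow_mul_multichoose] at h
    rw [sum_range_succ, ih, sqrtOneSubCoeff, h, pow_succ]
    rcases neg_one_pow_eq_or ℝ n with hn | hn <;> rw [hn] <;> ring

lemma sqrtOneSubCoeff_succ (n : ℕ) :
    sqrtOneSubCoeff (n + 1) = -(Ring.multichoose (1 / 2 : ℝ) n / (2 * (n + 1))) := by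
  have h := Ring.choose_smul_choose (1 / 2 : ℝ) (n := n + 1) (k := 1) (by omega)
  rw [show (1 / 2 : ℝ) - (1 : ℕ) = -(1 / 2) by norm_num,
    Ring.choose_neg_eq_neg_one_pow_mul_multichoose, Ring.choose_one_right, Nat.choose_one_right,
    nsmul_eq_mul, Nat.add_sub_cancel] at h
  push_cast at h
  rw [sqrtOneSubCoeff, eq_neg_iff_add_eq_zero]
  field_simp
  rw [pow_succ]
  rcases neg_one_pow_eq_or ℝ n with hn | hn <;> rw [hn] at h ⊢ <;> linarith

lemma sqrtOneSubCoeff_succ_nonpos (n : ℕ) : sqrtOneSubCoeff (n + 1) ≤ 0 := by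
  rw [sqrtOneSubCoeff_succ, neg_nonpos]
  exact div_nonneg (Ring.multichoose_pos (by norm_num) n).le (by positivity)

lemma sum_range_abs_sqrtOneSubCoeff_le (N : ℕ) : ∑ k ∈ range N, |sqrtOneSubCoeff k| ≤ 2 := by
  rcases N with _ | n
  · simp
  have habs : ∑ k ∈ range n, |sqrtOneSubCoeff (k + 1)| =
      -∑ k ∈ range n, sqrtOneSubCoeff (k + 1) := by
    rw [← sum_neg_distrib]
    exact sum_congr rfl fun k _ => abs_of_nonpos (sqrtOneSubCoeff_succ_nonpos k)
  have hpos := (Ring.multichoose_pos (by norm_num : (0 : ℝ) < 1 / 2) n).le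
  rw [← sum_range_succ_sqrtOneSubCoeff, sum_range_succ', sqrtOneSubCoeff_zero] at hpos
  rw [sum_range_succ', habs, sqrtOneSubCoeff_zero, abs_one]
  linarith

lemma summable_abs_sqrtOneSubCoeff : Summable fun n => |sqrtOneSubCoeff n| :=
  summable_of_sum_range_le (fun _ => abs_nonneg _) sum_range_abs_sqrtOneSubCoeff_le

lemma tsum_sqrtOneSubCoeff_nonneg : 0 ≤ ∑' n, sqrtOneSubCoeff n := by
  refine ge_of_tendsto' (Summable.of_abs summable_abs_sqrtOneSubCoeff).hasSum.tendsto_sum_nat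
    fun N => ?_
  rcases N with _ | n
  · simp
  rw [sum_range_succ_sqrtOneSubCoeff]
  exact (Ring.multichoose_pos (by norm_num) n).le

namespace ContinuousLinearMap

lemma exists_mem_closure_range_adjoint_comp_self_apply_eq {𝕜 E F : Type*} [RCLike 𝕜]
    [NormedAddCommGroup E] [InnerProductSpace 𝕜 E] [CompleteSpace E]
    [NormedAddCommGroup F] [InnerProductSpace 𝕜 F] [CompleteSpace F] (T : E →L[𝕜] F) (x : E) :
    ∃ k ∈ (adjoint T ∘L T).range.topologicalClosure, T k = T x := by
  obtain ⟨y, hy, z, hz, rfl⟩ := (T.ker).exists_add_mem_mem_orthogonal x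
  have hTy : T y = 0 := hy
  refine ⟨z, ?_, by simp [hTy]⟩
  rwa [← ker_adjoint_comp_self, orthogonal_ker, adjoint_comp, adjoint_adjoint] at hz

open scoped RealInnerProductSpace

variable {E : Type*} [NormedAddCommGroup E] [InnerProductSpace ℝ E]

lemma IsPositive.apply_eq_zero_of_inner_eq_zero_s9 {T : E →L[ℝ] E} (hT : T.IsPositive) {x : E}
    (hx : ⟪T x, x⟫ = 0) : T x = 0 := by
  set B : LinearMap.BilinForm ℝ E := (innerₗ E).comp (T : E →ₗ[ℝ] E)
  have hB : ∀ u v, B u v = ⟪T u, v⟫ := fun _ _ => rfl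
  have hcs := B.apply_mul_apply_le_of_forall_zero_le hT.inner_nonneg_left x (T x)
  simp only [hB, hx, zero_mul, hT.inner_left_eq_inner_right (T x) x] at hcs
  exact inner_self_eq_zero.mp (mul_self_eq_zero.mp (le_antisymm hcs (mul_self_nonneg _)))

lemma IsPositive.eq_of_mul_self_eq {A B : E →L[ℝ] E} (hA : A.IsPositive) (hB : B.IsPositive)
    (hAB : Commute A B) (h : A * A = B * B) : A = B := by
  ext x
  set y := (A - B) x
  have hsum : A y + B y = 0 := by
    have : (A + B) * (A - B) = 0 := by
      rw [add_mul, mul_sub, mul_sub, h, hAB.eq]; abel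
    simpa [y] using congr($this x)
  have hform : ⟪A y, y⟫ + ⟪B y, y⟫ = 0 := by
    rw [← inner_add_left, hsum, inner_zero_left]
  have hAy : ⟪A y, y⟫ = 0 := by linarith [hA.inner_nonneg_left y, hB.inner_nonneg_left y]
  have hBy : ⟪B y, y⟫ = 0 := by linarith [hA.inner_nonneg_left y, hB.inner_nonneg_left y]
  have hy : ⟪y, y⟫ = 0 :=
    calc ⟪y, y⟫ = ⟪x, (A - B) y⟫ := (hA.isSymmetric.sub hB.isSymmetric) x y
      _ = 0 := by
        simp [hA.apply_eq_zero_of_inner_eq_zero_s9 hAy, hB.apply_eq_zero_of_inner_eq_zero_s9 hBy]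
  exact sub_eq_zero.mp (inner_self_eq_zero.mp hy)

lemma norm_apply_sq_add_norm_apply_sq {A B : E →L[ℝ] E} (hA : A.IsSymmetric) (hB : B.IsSymmetric)
    (h : A * A + B * B = 1) (x : E) : ‖A x‖ ^ 2 + ‖B x‖ ^ 2 = ‖x‖ ^ 2 := by
  have hAx : ⟪A (A x), x⟫ = ⟪A x, A x⟫ := hA (A x) x
  have hBx : ⟪B (B x), x⟫ = ⟪B x, B x⟫ := hB (B x) x
  rw [← real_inner_self_eq_norm_sq, ← real_inner_self_eq_norm_sq, ← real_inner_self_eq_norm_sq,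
    ← hAx, ← hBx, ← inner_add_left]
  simpa using congr(⟪$h x, x⟫)

lemma norm_le_one_of_mul_self_add_mul_self_eq_one {A B : E →L[ℝ] E} (hA : A.IsSymmetric)
    (hB : B.IsSymmetric) (h : A * A + B * B = 1) : ‖A‖ ≤ 1 :=
  opNorm_le_bound _ zero_le_one fun x => by
    rw [one_mul, ← pow_le_pow_iff_left₀ (norm_nonneg _) (norm_nonneg _) two_ne_zero,
      ← norm_apply_sq_add_norm_apply_sq hA hB h x]
    exact le_add_of_nonneg_right (sq_nonneg _)

lemma norm_pow_le_one {W : E →L[ℝ] E} (hW : ‖W‖ ≤ 1) (n : ℕ) : ‖W ^ n‖ ≤ 1 := by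
  induction n with
  | zero => exact norm_id_le
  | succ n ih =>
    calc ‖W ^ (n + 1)‖ ≤ ‖W ^ n‖ * ‖W‖ := by rw [pow_succ]; exact opNorm_comp_le _ _
      _ ≤ 1 := mul_le_one₀ ih (norm_nonneg _) hW

noncomputable def sqrtOneSub (W : E →L[ℝ] E) : E →L[ℝ] E :=
  ∑' n, sqrtOneSubCoeff n • W ^ n

lemma summable_norm_sqrtOneSubCoeff_smul_pow {W : E →L[ℝ] E} (hW : ‖W‖ ≤ 1) :
    Summable fun n => ‖sqrtOneSubCoeff n • W ^ n‖ :=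
  summable_abs_sqrtOneSubCoeff.of_nonneg_of_le (fun _ => norm_nonneg _) fun n => by
    simpa [norm_smul] using mul_le_of_le_one_right (abs_nonneg _) (norm_pow_le_one hW n)

lemma _root_.Commute.sqrtOneSub_right {T W : E →L[ℝ] E} (h : Commute T W) :
    Commute T (sqrtOneSub W) :=
  Commute.tsum_right _ fun n => (h.pow_right n).smul_right _

variable [CompleteSpace E]

lemma sqrtOneSub_mul_self {W : E →L[ℝ] E} (hW : ‖W‖ ≤ 1) :
    sqrtOneSub W * sqrtOneSub W = 1 - W := by
  have hs := summable_norm_sqrtOneSubCoeff_smul_pow hW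
  have hterm (n : ℕ) : ∑ ij ∈ antidiagonal n,
      sqrtOneSubCoeff ij.1 • W ^ ij.1 * sqrtOneSubCoeff ij.2 • W ^ ij.2 =
        ((-1) ^ n * Nat.choose 1 n : ℝ) • W ^ n := by
    rw [← sum_antidiagonal_sqrtOneSubCoeff_mul, sum_smul]
    refine sum_congr rfl fun ij hij => ?_
    rw [HasAntidiagonal.mem_antidiagonal] at hij
    rw [smul_mul_smul_comm, ← pow_add, hij]
  rw [sqrtOneSub, tsum_mul_tsum_eq_tsum_sum_antidiagonal_of_summable_norm hs hs,
    tsum_congr hterm, tsum_eq_sum (s := range 2) fun n hn => by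
      rw [Nat.choose_eq_zero_of_lt (by simpa using hn)]; simp]
  simp [sum_range_succ, sub_eq_add_neg]

lemma isPositive_sqrtOneSub {W : E →L[ℝ] E} (hsa : IsSelfAdjoint W) (hW : ‖W‖ ≤ 1) :
    (sqrtOneSub W).IsPositive := by
  have hs := (summable_norm_sqrtOneSubCoeff_smul_pow hW).of_norm
  refine (isPositive_iff' _).2 ⟨?_, fun x => ?_⟩
  · rw [IsSelfAdjoint, sqrtOneSub, tsum_star]
    exact tsum_congr fun n => by simp [star_smul, (hsa.pow n).star_eq]
  · -- compare termwise with `(∑ aₙ) ‖x‖² ≥ 0`, using `aₙ ≤ 0` for `n ≥ 1` and `⟪x, Wⁿ x⟫ ≤ ‖x‖²`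
    have hsum := hs.hasSum.mapL ((innerSL ℝ x).comp (apply ℝ E x))
    have hcoeff := (Summable.of_abs summable_abs_sqrtOneSubCoeff).hasSum.mul_right (‖x‖ ^ 2)
    rw [real_inner_comm]
    refine le_trans (mul_nonneg tsum_sqrtOneSubCoeff_nonneg (sq_nonneg _))
      (hasSum_le (fun n => ?_) hcoeff hsum)
    simp only [coe_comp, Function.comp_apply, apply_apply, innerSL_apply_apply, smul_apply,
      real_inner_smul_right]
    rcases n with _ | n
    · simp [sqrtOneSubCoeff_zero]
    · refine mul_le_mul_of_nonpos_left ?_ (sqrtOneSubCoeff_succ_nonpos n)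
      calc ⟪x, (W ^ (n + 1)) x⟫ ≤ ‖x‖ * ‖(W ^ (n + 1)) x‖ := real_inner_le_norm _ _
        _ ≤ ‖x‖ * ‖x‖ := by
          gcongr
          exact (le_opNorm _ _).trans
            (mul_le_of_le_one_left (norm_nonneg _) (norm_pow_le_one hW _))
        _ = ‖x‖ ^ 2 := (sq _).symm

lemma IsPositive.commute_of_mul_self_add_mul_self_eq_one {A B : E →L[ℝ] E} (hA : A.IsPositive)
    (hB : B.IsPositive) (h : A * A + B * B = 1) : Commute A B := by
  have hA1 := norm_le_one_of_mul_self_add_mul_self_eq_one hA.isSymmetric hB.isSymmetric h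
  have hW : ‖A * A‖ ≤ 1 := (norm_mul_le _ _).trans (mul_le_one₀ hA1 (norm_nonneg _) hA1)
  have hWsa : IsSelfAdjoint (A * A) := by
    simpa [hA.isSelfAdjoint.star_eq] using IsSelfAdjoint.star_mul_self A
  have hAA : A * A = 1 - B * B := eq_sub_of_add_eq h
  have hBc : B = sqrtOneSub (A * A) := by
    refine hB.eq_of_mul_self_eq (isPositive_sqrtOneSub hWsa hW) ?_ ?_
    · have hBW : Commute B (A * A) :=
        hAA ▸ (Commute.one_right B).sub_right ((Commute.refl B).mul_right (.refl B))
      exact hBW.sqrtOneSub_right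
    · rw [sqrtOneSub_mul_self hW, ← h, add_sub_cancel_left]
  rw [hBc]
  exact ((Commute.refl A).mul_right (Commute.refl A)).sqrtOneSub_right

lemma forall_inner_add_inner_eq_zero_iff {A B : E →L[ℝ] E} (hA : IsSelfAdjoint A)
    (hB : IsSelfAdjoint B) (hAB : Commute A B) (h : A * A + B * B = 1) (φ ψ : E) :
    (∀ x, ⟪φ, A x⟫ + ⟪ψ, B x⟫ = 0) ↔
      ∃ k ∈ (LinearMap.range ((A * A) * (B * B) : E →ₗ[ℝ] E)).topologicalClosure,
        A φ = -(A (B k)) ∧ B ψ = A (B k) := by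
  have hinner (x : E) : ⟪φ, A x⟫ + ⟪ψ, B x⟫ = ⟪A φ + B ψ, x⟫ := by
    rw [inner_add_left, ← adjoint_inner_left, ← adjoint_inner_left, hA.adjoint_eq, hB.adjoint_eq]
  simp only [hinner]
  constructor
  · intro horth
    have hφ : A φ = -(B ψ) := eq_neg_of_add_eq_zero_left (inner_self_eq_zero.mp (horth _))
    have hBA (v : E) : B (A v) = A (B v) := congr($(hAB.eq) v).symm
    have hTk₀ : (A * B) (A ψ - B φ) = B ψ :=
      calc (A * B) (A ψ - B φ) = A (A (B ψ)) - B (B (A φ)) := by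
            simp only [mul_apply_eq_comp, map_sub, hBA]
        _ = (A * A + B * B) (B ψ) := by simp [hφ, sub_eq_add_neg]
        _ = B ψ := by rw [h, one_apply_eq_self]
    obtain ⟨k, hk, hTk⟩ := exists_mem_closure_range_adjoint_comp_self_apply_eq (A * B) (A ψ - B φ)
    have hTT : adjoint (A * B) ∘L (A * B) = (A * A) * (B * B) := by
      rw [← star_eq_adjoint, star_mul, hA.star_eq, hB.star_eq, ← mul_def]
      calc B * A * (A * B) = B * (A * A) * B := by noncomm_ring
        _ = A * A * (B * B) := by rw [((hAB.mul_left hAB).symm).eq]; noncomm_ring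
    rw [hTT] at hk
    have hABk : A (B k) = B ψ := hTk.trans hTk₀
    exact ⟨k, hk, by rw [hABk, hφ], hABk.symm⟩
  · rintro ⟨k, -, hφ, hψ⟩ x
    rw [hφ, hψ, neg_add_cancel, inner_zero_left]

lemma forall_exists_apply_eq_iff_isIdempotentElem {A B : E →L[ℝ] E} (hA : A.IsPositive)
    (hB : B.IsPositive) (h : A * A + B * B = 1) :
    (∀ φ ψ, ∃ x, (A * A) x = A φ ∧ (B * B) x = B ψ) ↔
      IsIdempotentElem (A * A) ∧ IsIdempotentElem (B * B) := by
  have hX : A * A = 1 - B * B := eq_sub_of_add_eq h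
  have hY : B * B = 1 - A * A := eq_sub_of_add_eq' h
  constructor
  · intro hsurj
    have hYA : B * B * A = 0 := by
      ext v
      obtain ⟨x, hx, hy⟩ := hsurj v 0
      have hxv : A v = x := by simpa [hx, hy] using congr($h x)
      show (B * B) (A v) = 0
      rw [hxv, hy, map_zero]
    have hYX : B * B * (A * A) = 0 := by rw [← mul_assoc, hYA, zero_mul]
    constructor
    · rw [IsIdempotentElem]; nth_rw 1 [hX]; rw [sub_mul, hYX, one_mul, sub_zero]
    · rw [IsIdempotentElem]; nth_rw 2 [hY]; rw [mul_sub, hYX, mul_one, sub_zero]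
  · rintro ⟨hXX, hYY⟩ φ ψ
    have hpos (S : E →L[ℝ] E) (hS : S.IsPositive) : (S * S).IsPositive := by
      simpa [mul_def, hS.isSelfAdjoint.adjoint_eq] using isPositive_adjoint_comp_self S
    have hAX : A = A * A := hA.eq_of_mul_self_eq (hpos A hA)
      ((Commute.refl A).mul_right (Commute.refl A)) hXX.symm
    have hBY : B = B * B := hB.eq_of_mul_self_eq (hpos B hB)
      ((Commute.refl B).mul_right (Commute.refl B)) hYY.symm
    have hXY : A * A * (B * B) = 0 := by rw [hY, mul_sub, mul_one, hXX, sub_self]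
    have hYX : B * B * (A * A) = 0 := by rw [hX, mul_sub, mul_one, hYY, sub_self]
    refine ⟨(A * A) φ + (B * B) ψ, ?_, ?_⟩
    · rw [map_add]
      show (A * A * (A * A)) φ + (A * A * (B * B)) ψ = A φ
      rw [hXX, hXY, zero_apply, add_zero, ← hAX]
    · rw [map_add]
      show (B * B * (A * A)) φ + (B * B * (B * B)) ψ = B ψ
      rw [hYY, hYX, zero_apply, zero_add, ← hBY]

end ContinuousLinearMap

theorem stmt_9_general {K : Type*} [NormedAddCommGroup K] [InnerProductSpace ℝ K] [CompleteSpace K]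
    (X Y Sx Sy : K →L[ℝ] K)
    (hXY : X + Y = 1)
    (hSxsa : IsSelfAdjoint Sx) (hSx0 : ∀ x, 0 ≤ (inner ℝ (Sx x) x : ℝ)) (hSx : Sx.comp Sx = X)
    (hSysa : IsSelfAdjoint Sy) (hSy0 : ∀ x, 0 ≤ (inner ℝ (Sy x) x : ℝ)) (hSy : Sy.comp Sy = Y) :
    (∀ φ ∈ (LinearMap.range (Sx : K →ₗ[ℝ] K)).topologicalClosure,
      ∀ ψ ∈ (LinearMap.range (Sy : K →ₗ[ℝ] K)).topologicalClosure,
      ((∀ h : K, (inner ℝ φ (Sx h) : ℝ) + inner ℝ ψ (Sy h) = 0) ↔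
        ∃ k ∈ (LinearMap.range ((X.comp Y : K →L[ℝ] K) : K →ₗ[ℝ] K)).topologicalClosure,
          Sx φ = -(Sx (Sy k)) ∧ Sy ψ = Sx (Sy k))) ∧
    ((∀ φ ψ : K, ∃ h : K, X h = Sx φ ∧ Y h = Sy ψ) ↔
      (X.comp X = X ∧ Y.comp Y = Y)) := by
  subst hSx hSy
  have hA : Sx.IsPositive := (Sx.isPositive_iff').2 ⟨hSxsa, hSx0⟩
  have hB : Sy.IsPositive := (Sy.isPositive_iff').2 ⟨hSysa, hSy0⟩
  have hAB := hA.commute_of_mul_self_add_mul_self_eq_one hB hXY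
  exact ⟨fun φ _ ψ _ =>
      ContinuousLinearMap.forall_inner_add_inner_eq_zero_iff hSxsa hSysa hAB hXY φ ψ,
    ContinuousLinearMap.forall_exists_apply_eq_iff_isIdempotentElem hA hB hXY⟩

/-- the orthogonal complement of ran V in 𝔛 × 𝔜, for the column isometry
V h = (Xh, Yh), is { (−X^{1/2}Y^{1/2}k, X^{1/2}Y^{1/2}k) : k ∈ closure(ran XY) };
pairs in 𝔛 × 𝔜 are represented by their canonical representatives φ ∈ closure(ran Sx),
ψ ∈ closure(ran Sy) (so the pair is (Sx φ, Sy ψ) and the 𝔛 × 𝔜-inner product with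
V h is (φ, Sx h)_K + (ψ, Sy h)_K).  Moreover V is surjective (i.e., every pair
(Sx φ, Sy ψ) ∈ 𝔛 × 𝔜 is of the form (Xh, Yh)) iff X and Y are orthogonal projections. -/
theorem stmt_9 {K : Type*} [NormedAddCommGroup K] [InnerProductSpace ℝ K] [CompleteSpace K]
    (X Y Sx Sy : K →L[ℝ] K)
    (hXsa : IsSelfAdjoint X) (hYsa : IsSelfAdjoint Y)
    (hX0 : ∀ x, 0 ≤ (inner ℝ (X x) x : ℝ)) (hX1 : ∀ x, (inner ℝ (X x) x : ℝ) ≤ ‖x‖ ^ 2)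
    (hY0 : ∀ x, 0 ≤ (inner ℝ (Y x) x : ℝ)) (hY1 : ∀ x, (inner ℝ (Y x) x : ℝ) ≤ ‖x‖ ^ 2)
    (hXY : X + Y = 1)
    (hSxsa : IsSelfAdjoint Sx) (hSx0 : ∀ x, 0 ≤ (inner ℝ (Sx x) x : ℝ)) (hSx : Sx.comp Sx = X)
    (hSysa : IsSelfAdjoint Sy) (hSy0 : ∀ x, 0 ≤ (inner ℝ (Sy x) x : ℝ)) (hSy : Sy.comp Sy = Y) :
    (∀ φ ∈ (LinearMap.range (Sx : K →ₗ[ℝ] K)).topologicalClosure,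
      ∀ ψ ∈ (LinearMap.range (Sy : K →ₗ[ℝ] K)).topologicalClosure,
      ((∀ h : K, (inner ℝ φ (Sx h) : ℝ) + inner ℝ ψ (Sy h) = 0) ↔
        ∃ k ∈ (LinearMap.range ((X.comp Y : K →L[ℝ] K) : K →ₗ[ℝ] K)).topologicalClosure,
          Sx φ = -(Sx (Sy k)) ∧ Sy ψ = Sx (Sy k))) ∧
    ((∀ φ ψ : K, ∃ h : K, X h = Sx φ ∧ Y h = Sy ψ) ↔
      (X.comp X = X ∧ Y.comp Y = Y)) :=
  stmt_9_general X Y Sx Sy hXY hSxsa hSx0 hSx hSysa hSy0 hSy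
end

section
/- Let W h = (X^{1/2}h, Y^{1/2}h) be the closed isometry from K into K₁ × K₂, where K₁ = closure(ran X), K₂ = closure(ran Y) carry the inner product of K, and X, Y are nonnegative contractions with X + Y = I. Then W* (f, g) = X^{1/2}f + Y^{1/2}g is a partial isometry, ‖X^{1/2}f + Y^{1/2}g‖²_K ≤ ‖f‖²_K + ‖g‖²_K for f ∈ K₁, g ∈ K₂, with equality if and only if f = X^{1/2}h and g = Y^{1/2}h for some h ∈ K, and the orthogonal complement of ran W equals { (−Y^{1/2}k, X^{1/2}k) : k ∈ closure(ran XY) }. -/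
/-!
Everything rests on `Sx` and `Sy` commuting. As `Sy² = 1 - Sx²` commutes with `Sx`, this is the
fact that a positive operator `A` commutes with every self-adjoint `B` commuting with `A²`:
`C = AB - BA` is skew and anticommutes with `A`, so `T = AC` is self-adjoint and anticommutes
with `A`. Then `A` commutes with `T² ≥ 0`, hence `AT² ≥ 0` (commuting positive operators have a
positive product, proved with the Riesz iteration `Pₙ₊₁ = Pₙ - Pₙ²`), whereas `AT² = -TAT ≤ 0`;
this forces `AT = 0`, and the C⋆-identity then gives `C = 0`.

Once `Sx` and `Sy` commute, `h ↦ (Sx h, Sy h)` is an isometry, and everything else follows from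
`‖f - Sx u‖² + ‖g - Sy u‖² = ‖f‖² + ‖g‖² - ‖u‖²` for `u = Sx f + Sy g`, together with
`closure (range S²) = (ker S)ᗮ` for self-adjoint `S`.
-/

open scoped InnerProductSpace

theorem IsSelfAdjoint.inner_left_eq_inner_right {E : Type*} [NormedAddCommGroup E]
    [InnerProductSpace ℝ E] [CompleteSpace E] {S : E →L[ℝ] E} (hS : IsSelfAdjoint S) (x y : E) :
    ⟪S x, y⟫_ℝ = ⟪x, S y⟫_ℝ :=
  hS.isSymmetric x y

namespace ContinuousLinearMap

variable {E : Type*} [NormedAddCommGroup E] [InnerProductSpace ℝ E]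

theorem IsPositive.apply_eq_zero_of_inner_eq_zero_s11 {A : E →L[ℝ] E} (hA : A.IsPositive) {w : E}
    (hw : ⟪A w, w⟫_ℝ = 0) : A w = 0 := by
  have hquad : ∀ t : ℝ, 0 ≤ ⟪A (A w), A w⟫_ℝ * (t * t) + 2 * ‖A w‖ ^ 2 * t + 0 := fun t => by
    have h := hA.inner_nonneg_left (w + t • A w)
    rw [← real_inner_self_eq_norm_sq]
    simp only [map_add, map_smul, inner_add_left, inner_add_right, real_inner_smul_left,
      real_inner_smul_right, hw, hA.inner_left_eq_inner_right (A w) w] at h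
    linarith
  have hdisc := discrim_le_zero hquad
  rw [discrim] at hdisc
  exact norm_eq_zero.mp (pow_eq_zero_iff two_ne_zero |>.mp (by nlinarith [sq_nonneg (‖A w‖ ^ 2)]))

theorem apply_apply_add_apply_apply {S T : E →L[ℝ] E} (hST : S * S + T * T = 1) (v : E) :
    S (S v) + T (T v) = v := by
  simpa using congr($hST v)

def rieszSeq (A : E →L[ℝ] E) : ℕ → E →L[ℝ] E
  | 0 => A
  | n + 1 => rieszSeq A n - rieszSeq A n * rieszSeq A n

variable {A B : E →L[ℝ] E}

theorem Commute.rieszSeq_left (h : Commute A B) (n : ℕ) : Commute (rieszSeq A n) B := by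
  induction n with
  | zero => exact h
  | succ n ih => exact ih.sub_left (ih.mul_left ih)

theorem sum_mul_self_rieszSeq_add (A : E →L[ℝ] E) (n : ℕ) :
    ∑ k ∈ Finset.range n, rieszSeq A k * rieszSeq A k + rieszSeq A n = A := by
  induction n with
  | zero => simp [rieszSeq]
  | succ n ih => rw [Finset.sum_range_succ, rieszSeq]; convert ih using 1; abel

variable [CompleteSpace E]

theorem isPositive_rieszSeq_and_le_one (hA : A.IsPositive) (hA1 : A ≤ 1) (n : ℕ) :
    (rieszSeq A n).IsPositive ∧ rieszSeq A n ≤ 1 := by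
  induction n with
  | zero => exact ⟨hA, hA1⟩
  | succ n ih =>
    obtain ⟨hP, hP1⟩ := ih
    set P := rieszSeq A n
    have hPsa : adjoint P = P := hP.isSelfAdjoint.adjoint_eq
    have hQ : (1 - P).IsPositive := hP1
    refine ⟨?_, ?_⟩
    · have hsplit : P - P * P = P ∘L (1 - P) ∘L adjoint P + (1 - P) ∘L P ∘L adjoint (1 - P) := by
        rw [hPsa, hQ.isSelfAdjoint.adjoint_eq, ← mul_def, ← mul_def, ← mul_def, ← mul_def]
        noncomm_ring
      show (P - P * P).IsPositive
      rw [hsplit]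
      exact (hQ.conj_adjoint P).add (hP.conj_adjoint (1 - P))
    · have hsplit : 1 - (P - P * P) = (1 - P) + adjoint P ∘L P := by
        rw [hPsa, ← mul_def]; noncomm_ring
      show (1 - (P - P * P)).IsPositive
      rw [hsplit]
      exact hQ.add (isPositive_adjoint_comp_self P)

open Filter Topology Finset in
theorem IsPositive.mul_of_commute_of_le_one (hA : A.IsPositive) (hA1 : A ≤ 1)
    (hB : B.IsPositive) (hAB : Commute A B) : (A * B).IsPositive := by
  refine (isPositive_iff' _).2 ⟨(hA.isSelfAdjoint.commute_iff hB.isSelfAdjoint).1 hAB, fun v => ?_⟩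
  have hP n : (rieszSeq A n).IsPositive := (isPositive_rieszSeq_and_le_one hA hA1 n).1
  have hsplit (n : ℕ) (w : E) :
      ⟪A w, v⟫_ℝ = ∑ k ∈ range n, ⟪rieszSeq A k w, rieszSeq A k v⟫_ℝ + ⟪w, rieszSeq A n v⟫_ℝ := by
    conv_lhs => rw [← sum_mul_self_rieszSeq_add A n]
    simp only [add_apply, FunLike.coe_sum, Finset.sum_apply, mul_apply_eq_comp, inner_add_left,
      sum_inner, fun k => (hP k).inner_left_eq_inner_right]
  have hsum_le n : ∑ k ∈ range n, ‖rieszSeq A k v‖ ^ 2 ≤ ⟪A v, v⟫_ℝ := by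
    simp only [hsplit n v, real_inner_self_eq_norm_sq, le_add_iff_nonneg_right]
    exact (hP n).inner_nonneg_right v
  have hlim : Tendsto (fun n => rieszSeq A n v) atTop (𝓝 0) := by
    have := (summable_of_sum_range_le (fun n => sq_nonneg _) hsum_le).tendsto_atTop_zero.sqrt
    rw [tendsto_zero_iff_norm_tendsto_zero]
    simpa using this
  have hinner_lim : Tendsto (fun n => ⟪B v, rieszSeq A n v⟫_ℝ) atTop (𝓝 0) := by
    simpa using (tendsto_const_nhds (x := B v)).inner (𝕜 := ℝ) hlim
  refine le_of_tendsto' hinner_lim fun n => ?_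
  have hterm k :
      ⟪B (rieszSeq A k v), rieszSeq A k v⟫_ℝ = ⟪rieszSeq A k (B v), rieszSeq A k v⟫_ℝ := by
    rw [← mul_apply_eq_comp, ← (Commute.rieszSeq_left hAB k).eq, mul_apply_eq_comp]
  rw [mul_apply_eq_comp, hsplit n, le_add_iff_nonneg_left]
  exact sum_nonneg fun k _ => hterm k ▸ hB.inner_nonneg_left _

theorem IsPositive.inv_norm_add_one_smul_le_one (hA : A.IsPositive) : (‖A‖ + 1)⁻¹ • A ≤ 1 := by
  have hc : 0 < ‖A‖ + 1 := by positivity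
  rw [le_def, isPositive_iff']
  refine ⟨(IsSelfAdjoint.one _).sub ((IsSelfAdjoint.all _).smul hA.isSelfAdjoint), fun v => ?_⟩
  have hAv : ⟪A v, v⟫_ℝ ≤ (‖A‖ + 1) * ‖v‖ ^ 2 :=
    calc ⟪A v, v⟫_ℝ ≤ ‖A v‖ * ‖v‖ := real_inner_le_norm _ _
      _ ≤ ‖A‖ * ‖v‖ * ‖v‖ := by gcongr; exact A.le_opNorm v
      _ ≤ (‖A‖ + 1) * ‖v‖ ^ 2 := by nlinarith [sq_nonneg ‖v‖]
  rw [sub_apply, one_apply_eq_self, smul_apply, inner_sub_left, real_inner_smul_left,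
    real_inner_self_eq_norm_sq, sub_nonneg, inv_mul_le_iff₀ hc]
  exact hAv

theorem IsPositive.mul_of_commute (hA : A.IsPositive) (hB : B.IsPositive) (hAB : Commute A B) :
    (A * B).IsPositive := by
  have hc : 0 < ‖A‖ + 1 := by positivity
  have hscaled := mul_of_commute_of_le_one (hA.smul_of_nonneg (inv_nonneg.2 hc.le))
    hA.inv_norm_add_one_smul_le_one hB (hAB.smul_left _)
  have := hscaled.smul_of_nonneg hc.le
  rwa [smul_mul_assoc, smul_smul, mul_inv_cancel₀ hc.ne', one_smul] at this

theorem IsPositive.mul_eq_zero_of_anticommute {T : E →L[ℝ] E} (hA : A.IsPositive)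
    (hT : IsSelfAdjoint T) (hAT : T * A = -(A * T)) : A * T = 0 := by
  have hTT : (T * T).IsPositive := by
    have := isPositive_adjoint_comp_self T
    rwa [hT.adjoint_eq] at this
  have hTA : A * T = -(T * A) := by rw [hAT, neg_neg]
  have hATT : A * (T * T) = -(T * A * T) := by rw [← mul_assoc A T T, hTA, neg_mul]
  have hcomm : Commute A (T * T) := by
    show A * (T * T) = T * T * A
    rw [mul_assoc T T A, hAT, hATT]; noncomm_ring
  ext v
  refine hA.apply_eq_zero_of_inner_eq_zero_s11 (le_antisymm ?_ (hA.inner_nonneg_left (T v)))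
  have hprod := (hA.mul_of_commute hTT hcomm).inner_nonneg_left v
  rwa [hATT, neg_apply, inner_neg_left, mul_apply_eq_comp, mul_apply_eq_comp,
    hT.inner_left_eq_inner_right, neg_nonneg] at hprod

theorem IsPositive.commute_of_commute_mul_self (hA : A.IsPositive) (hB : IsSelfAdjoint B)
    (h : Commute (A * A) B) : Commute A B := by
  have hAsa := hA.isSelfAdjoint
  set C := A * B - B * A with hCdef
  have hCstar : star C = -C := by
    rw [hCdef, star_sub, star_mul, star_mul, hAsa.star_eq, hB.star_eq, neg_sub]
  have hanti : C * A = -(A * C) := by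
    have hsum : C * A + A * C = A * A * B - B * (A * A) := by rw [hCdef]; noncomm_ring
    rw [h.eq, sub_self] at hsum
    exact eq_neg_of_add_eq_zero_left hsum
  have hT : IsSelfAdjoint (A * C) := by
    rw [IsSelfAdjoint, star_mul, hCstar, hAsa.star_eq, neg_mul, hanti, neg_neg]
  have hAAC : A * (A * C) = 0 :=
    hA.mul_eq_zero_of_anticommute hT (by rw [mul_assoc, hanti]; noncomm_ring)
  have hAC : A * C = 0 := by
    rw [← CStarRing.star_mul_self_eq_zero_iff, star_mul, hCstar, hAsa.star_eq, mul_assoc, hAAC,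
      mul_zero]
  have hCA : C * A = 0 := by rw [hanti, hAC, neg_zero]
  have hCC : C * C = A * B * C := by
    conv_lhs => rw [hCdef]
    rw [sub_mul, mul_assoc B, hAC, mul_zero, sub_zero]
  have hCC0 : C * C = 0 := by
    rw [← CStarRing.star_mul_self_eq_zero_iff, star_mul, hCstar, neg_mul_neg]
    nth_rewrite 2 [hCC]
    simp only [mul_assoc]
    rw [← mul_assoc C A, hCA, zero_mul, mul_zero]
  have hC : C = 0 := by
    rw [← CStarRing.star_mul_self_eq_zero_iff, hCstar, neg_mul, hCC0, neg_zero]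
  exact sub_eq_zero.mp hC

end ContinuousLinearMap

namespace IsSelfAdjoint

open ContinuousLinearMap

variable {E : Type*} [NormedAddCommGroup E] [InnerProductSpace ℝ E] [CompleteSpace E]
  {S T : E →L[ℝ] E}

theorem ker_mul_self (hS : IsSelfAdjoint S) :
    LinearMap.ker ((S * S : E →L[ℝ] E) : E →ₗ[ℝ] E) = LinearMap.ker (S : E →ₗ[ℝ] E) := by
  have := S.ker_adjoint_comp_self
  rwa [hS.adjoint_eq] at this

theorem topologicalClosure_range_mul_self (hS : IsSelfAdjoint S) :
    (LinearMap.range ((S * S : E →L[ℝ] E) : E →ₗ[ℝ] E)).topologicalClosure =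
      (LinearMap.ker (S : E →ₗ[ℝ] E))ᗮ := by
  rw [← hS.ker_mul_self, orthogonal_ker, ((hS.commute_iff hS).1 (Commute.refl S)).adjoint_eq]

theorem norm_sq_add_norm_sq (hS : IsSelfAdjoint S) (hT : IsSelfAdjoint T)
    (hST : S * S + T * T = 1) (v : E) : ‖S v‖ ^ 2 + ‖T v‖ ^ 2 = ‖v‖ ^ 2 := by
  rw [← real_inner_self_eq_norm_sq, ← real_inner_self_eq_norm_sq, ← real_inner_self_eq_norm_sq,
    hS.inner_left_eq_inner_right, hT.inner_left_eq_inner_right, ← inner_add_right,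
    apply_apply_add_apply_apply hST]

theorem norm_sub_sq_add_norm_sub_sq (hS : IsSelfAdjoint S) (hT : IsSelfAdjoint T)
    (hST : S * S + T * T = 1) (f g : E) :
    ‖f - S (S f + T g)‖ ^ 2 + ‖g - T (S f + T g)‖ ^ 2 = ‖f‖ ^ 2 + ‖g‖ ^ 2 - ‖S f + T g‖ ^ 2 := by
  set u := S f + T g
  have hu : ⟪f, S u⟫_ℝ + ⟪g, T u⟫_ℝ = ‖u‖ ^ 2 := by
    rw [← hS.inner_left_eq_inner_right, ← hT.inner_left_eq_inner_right, ← inner_add_left,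
      real_inner_self_eq_norm_sq]
  rw [norm_sub_sq_real, norm_sub_sq_real]
  linarith [hS.norm_sq_add_norm_sq hT hST u]

theorem norm_apply_add_apply_sq_le (hS : IsSelfAdjoint S) (hT : IsSelfAdjoint T)
    (hST : S * S + T * T = 1) (f g : E) : ‖S f + T g‖ ^ 2 ≤ ‖f‖ ^ 2 + ‖g‖ ^ 2 := by
  have := hS.norm_sub_sq_add_norm_sub_sq hT hST f g
  nlinarith [sq_nonneg ‖f - S (S f + T g)‖, sq_nonneg ‖g - T (S f + T g)‖]

theorem norm_apply_add_apply_sq_eq_iff (hS : IsSelfAdjoint S) (hT : IsSelfAdjoint T)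
    (hST : S * S + T * T = 1) (f g : E) :
    ‖S f + T g‖ ^ 2 = ‖f‖ ^ 2 + ‖g‖ ^ 2 ↔ ∃ h, f = S h ∧ g = T h := by
  constructor
  · intro heq
    have hsum := hS.norm_sub_sq_add_norm_sub_sq hT hST f g
    rw [heq, sub_self, add_eq_zero_iff_of_nonneg (sq_nonneg _) (sq_nonneg _)] at hsum
    simp only [sq_eq_zero_iff, norm_eq_zero, sub_eq_zero] at hsum
    exact ⟨_, hsum⟩
  · rintro ⟨h, rfl, rfl⟩
    rw [apply_apply_add_apply_apply hST, hS.norm_sq_add_norm_sq hT hST]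

theorem apply_add_apply_eq_zero_iff (hS : IsSelfAdjoint S) (hT : IsSelfAdjoint T)
    (hST : S * S + T * T = 1) (hc : Commute S T) {f g : E}
    (hf : f ∈ (LinearMap.ker (S : E →ₗ[ℝ] E))ᗮ) (hg : g ∈ (LinearMap.ker (T : E →ₗ[ℝ] E))ᗮ) :
    S f + T g = 0 ↔
      ∃ k ∈ (LinearMap.ker ((S * T : E →L[ℝ] E) : E →ₗ[ℝ] E))ᗮ, f = -(T k) ∧ g = S k := by
  have hcv v : S (T v) = T (S v) := congr($hc.eq v)
  constructor
  · intro h0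
    have hSf : S f = -(T g) := eq_neg_of_add_eq_zero_left h0
    have hTg : T g = -(S f) := eq_neg_of_add_eq_zero_right h0
    refine ⟨S g - T f, ?_, ?_, ?_⟩
    · refine (Submodule.mem_orthogonal _ _).2 fun w hw => ?_
      have hSTw : S (T w) = 0 := hw
      have hTSw : T (S w) = 0 := hcv w ▸ hSTw
      rw [inner_sub_right, ← hS.inner_left_eq_inner_right, ← hT.inner_left_eq_inner_right,
        Submodule.inner_right_of_mem_orthogonal hTSw hg,
        Submodule.inner_right_of_mem_orthogonal hSTw hf, sub_zero]
    · rw [map_sub, ← hcv, hTg, map_neg, ← neg_add', apply_apply_add_apply_apply hST, neg_neg]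
    · rw [map_sub, hcv, hSf, map_neg, sub_neg_eq_add, apply_apply_add_apply_apply hST]
  · rintro ⟨k, -, rfl, rfl⟩
    rw [map_neg, hcv, neg_add_cancel]

end IsSelfAdjoint

theorem stmt_11_general {K : Type*} [NormedAddCommGroup K] [InnerProductSpace ℝ K] [CompleteSpace K]
    (X Y Sx Sy : K →L[ℝ] K)
    (hXY : X + Y = 1)
    (hSxsa : IsSelfAdjoint Sx) (hSx : Sx.comp Sx = X)
    (hSysa : IsSelfAdjoint Sy) (hSy0 : ∀ x, 0 ≤ (inner ℝ (Sy x) x : ℝ)) (hSy : Sy.comp Sy = Y) :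
    (∀ f ∈ (LinearMap.range (X : K →ₗ[ℝ] K)).topologicalClosure,
      ∀ g ∈ (LinearMap.range (Y : K →ₗ[ℝ] K)).topologicalClosure,
      (∀ h : K, (inner ℝ (Sx f + Sy g) h : ℝ) = inner ℝ f (Sx h) + inner ℝ g (Sy h)) ∧
      ‖Sx f + Sy g‖ ^ 2 ≤ ‖f‖ ^ 2 + ‖g‖ ^ 2 ∧
      (‖Sx f + Sy g‖ ^ 2 = ‖f‖ ^ 2 + ‖g‖ ^ 2 ↔ ∃ h : K, f = Sx h ∧ g = Sy h) ∧
      ((∀ h : K, (inner ℝ f (Sx h) : ℝ) + inner ℝ g (Sy h) = 0) ↔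
        ∃ k ∈ (LinearMap.range ((X.comp Y : K →L[ℝ] K) : K →ₗ[ℝ] K)).topologicalClosure,
          f = -(Sy k) ∧ g = Sx k)) ∧
    (∀ h : K, Sx (Sx h) + Sy (Sy h) = h) := by
  obtain rfl : Sx * Sx = X := hSx
  obtain rfl : Sy * Sy = Y := hSy
  have hcomm : Commute Sx Sy := by
    have hSy_pos : Sy.IsPositive := (ContinuousLinearMap.isPositive_iff' Sy).2 ⟨hSysa, hSy0⟩
    have hSySy : Commute (Sy * Sy) Sx := by
      rw [eq_sub_of_add_eq' hXY]
      exact (Commute.one_left Sx).sub_left ((Commute.refl Sx).mul_left (Commute.refl Sx))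
    exact (hSy_pos.commute_of_commute_mul_self hSxsa hSySy).symm
  have hXYsq : (Sx * Sx).comp (Sy * Sy) = Sx * Sy * (Sx * Sy) := hcomm.mul_mul_mul_comm Sx Sy
  rw [hXYsq, hSxsa.topologicalClosure_range_mul_self, hSysa.topologicalClosure_range_mul_self,
    ((hSxsa.commute_iff hSysa).1 hcomm).topologicalClosure_range_mul_self]
  refine ⟨fun f hf g hg => ?_, ContinuousLinearMap.apply_apply_add_apply_apply hXY⟩
  have hadj h : ⟪Sx f + Sy g, h⟫_ℝ = ⟪f, Sx h⟫_ℝ + ⟪g, Sy h⟫_ℝ := by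
    rw [inner_add_left, hSxsa.inner_left_eq_inner_right, hSysa.inner_left_eq_inner_right]
  have hperp : (∀ h, ⟪f, Sx h⟫_ℝ + ⟪g, Sy h⟫_ℝ = 0) ↔ Sx f + Sy g = 0 := by
    simp only [← hadj]
    exact ⟨fun h => inner_self_eq_zero.mp (h _), fun h0 h => by rw [h0, inner_zero_left]⟩
  exact ⟨hadj, hSxsa.norm_apply_add_apply_sq_le hSysa hXY f g,
    hSxsa.norm_apply_add_apply_sq_eq_iff hSysa hXY f g,
    hperp.trans (hSxsa.apply_add_apply_eq_zero_iff hSysa hXY hcomm hf hg)⟩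

/-- for the closed isometry W h = (X^{1/2}h, Y^{1/2}h) from K into
K₁ × K₂, where K₁ = closure(ran X), K₂ = closure(ran Y) carry the inner product of K:
the adjoint is W*(f,g) = X^{1/2}f + Y^{1/2}g (expressed via the adjoint identity);
W* is a partial isometry (it is isometric on ran W: W*(Wh) = h);
‖X^{1/2}f + Y^{1/2}g‖² ≤ ‖f‖² + ‖g‖² for f ∈ K₁, g ∈ K₂, with equality iff
f = X^{1/2}h and g = Y^{1/2}h for some h ∈ K; and the orthogonal complement of ran W
equals { (−Y^{1/2}k, X^{1/2}k) : k ∈ closure(ran XY) }. -/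
theorem stmt_11 {K : Type*} [NormedAddCommGroup K] [InnerProductSpace ℝ K] [CompleteSpace K]
    (X Y Sx Sy : K →L[ℝ] K)
    (hXsa : IsSelfAdjoint X) (hYsa : IsSelfAdjoint Y)
    (hX0 : ∀ x, 0 ≤ (inner ℝ (X x) x : ℝ)) (hX1 : ∀ x, (inner ℝ (X x) x : ℝ) ≤ ‖x‖ ^ 2)
    (hY0 : ∀ x, 0 ≤ (inner ℝ (Y x) x : ℝ)) (hY1 : ∀ x, (inner ℝ (Y x) x : ℝ) ≤ ‖x‖ ^ 2)
    (hXY : X + Y = 1)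
    (hSxsa : IsSelfAdjoint Sx) (hSx0 : ∀ x, 0 ≤ (inner ℝ (Sx x) x : ℝ)) (hSx : Sx.comp Sx = X)
    (hSysa : IsSelfAdjoint Sy) (hSy0 : ∀ x, 0 ≤ (inner ℝ (Sy x) x : ℝ)) (hSy : Sy.comp Sy = Y) :
    (∀ f ∈ (LinearMap.range (X : K →ₗ[ℝ] K)).topologicalClosure,
      ∀ g ∈ (LinearMap.range (Y : K →ₗ[ℝ] K)).topologicalClosure,
      (∀ h : K, (inner ℝ (Sx f + Sy g) h : ℝ) = inner ℝ f (Sx h) + inner ℝ g (Sy h)) ∧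
      ‖Sx f + Sy g‖ ^ 2 ≤ ‖f‖ ^ 2 + ‖g‖ ^ 2 ∧
      (‖Sx f + Sy g‖ ^ 2 = ‖f‖ ^ 2 + ‖g‖ ^ 2 ↔ ∃ h : K, f = Sx h ∧ g = Sy h) ∧
      ((∀ h : K, (inner ℝ f (Sx h) : ℝ) + inner ℝ g (Sy h) = 0) ↔
        ∃ k ∈ (LinearMap.range ((X.comp Y : K →L[ℝ] K) : K →ₗ[ℝ] K)).topologicalClosure,
          f = -(Sy k) ∧ g = Sx k)) ∧
    (∀ h : K, Sx (Sx h) + Sy (Sy h) = h) :=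
  stmt_11_general X Y Sx Sy hXY hSxsa hSx hSysa hSy0 hSy
end
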